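/- For every r ≥ 1 and a ≥ 2, the coin system D with 3r+2 values defined by d_1 = 1, d_2 = 2, d_k = d_{k-1} + a for odd k with 3 ≤ k < 2r+2, d_k = d_{k-1} + 1 for even k with 3 < k ≤ 2r+2, and d_k = d_{k-1} + a + 1 for 2r+2 < k ≤ 3r+2, is orderly. -/
import Mathlib


/-- The largest coin value in `C` that is at most `v` (or 0 if none). -/
def coinMax (C : List ℕ) (v : ℕ) : ℕ := (C.filter (· ≤ v)).foldr max 0

/-- Fuelled greedy coin count. -/
def grdAux (C : List ℕ) : ℕ → ℕ → ℕ
  | 0, _ => 0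
  | fuel + 1, v =>
    let c := coinMax C v
    if v = 0 ∨ c = 0 then 0 else 1 + grdAux C fuel (v - c)

/-- Number of coins used by the greedy algorithm to represent `v` with coin system `C`. -/
def grd (C : List ℕ) (v : ℕ) : ℕ := grdAux C v v

/-- The set of sizes of representations of `v` as nonnegative integer combinations of
the coin values in `C`. -/
def reprCosts (C : List ℕ) (v : ℕ) : Set ℕ :=
  {k | ∃ x : List ℕ, x.length = C.length ∧ (List.zipWith (· * ·) x C).sum = v ∧ x.sum = k}

/-- Minimum number of coins needed to represent `v` with coin system `C`. -/
noncomputable def opt (C : List ℕ) (v : ℕ) : ℕ := sInf (reprCosts C v)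

/-- A coin system is orderly if greedy is optimal for every positive value. -/
def Orderly (C : List ℕ) : Prop := ∀ v : ℕ, 0 < v → grd C v = opt C v

/-- The `k`-th coin value (1-indexed) of the fixed-gap family `D` with parameters `r, a`. -/
def dCoin (r a : ℕ) : ℕ → ℕ
  | 0 => 0
  | 1 => 1
  | 2 => 2
  | k + 3 =>
    dCoin r a (k + 2) +
      (if k + 3 ≤ 2 * r + 2 then (if (k + 3) % 2 = 1 then a else 1) else a + 1)

namespace S19

lemma le_foldr_max (l : List ℕ) (x : ℕ) (hx : x ∈ l) : x ≤ l.foldr max 0 := by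
  induction l with
  | nil => simp at hx
  | cons y l ih =>
    rcases List.mem_cons.1 hx with h | h
    · subst h; exact le_max_left _ _
    · exact le_trans (ih h) (le_max_right _ _)

lemma foldr_max_le (l : List ℕ) (v : ℕ) (h : ∀ x ∈ l, x ≤ v) : l.foldr max 0 ≤ v := by
  induction l with
  | nil => simp
  | cons y l ih =>
    simp only [List.foldr_cons]
    exact max_le (h y (by simp)) (ih fun x hx => h x (List.mem_cons_of_mem _ hx))

lemma foldr_max_mem (l : List ℕ) : l.foldr max 0 = 0 ∨ l.foldr max 0 ∈ l := by
  induction l with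
  | nil => simp
  | cons y l ih =>
    simp only [List.foldr_cons]
    rcases le_total y (l.foldr max 0) with h | h
    · rw [max_eq_right h]
      rcases ih with h' | h'
      · left; exact h'
      · right; exact List.mem_cons_of_mem _ h'
    · rw [max_eq_left h]; right; simp

lemma le_coinMax {C : List ℕ} {c v : ℕ} (hc : c ∈ C) (hle : c ≤ v) : c ≤ coinMax C v :=
  le_foldr_max _ _ (List.mem_filter.2 ⟨hc, by simpa using hle⟩)

lemma coinMax_le {C : List ℕ} (v : ℕ) : coinMax C v ≤ v :=
  foldr_max_le _ _ (fun x hx => by simpa using (List.mem_filter.1 hx).2)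

lemma coinMax_mem {C : List ℕ} (v : ℕ) : coinMax C v = 0 ∨ coinMax C v ∈ C := by
  rcases foldr_max_mem (C.filter (· ≤ v)) with h | h
  · left; exact h
  · right; exact (List.mem_filter.1 h).1

lemma coinMax_eq_of {C : List ℕ} {c v : ℕ} (hc : c ∈ C) (hle : c ≤ v)
    (hmax : ∀ c' ∈ C, c' ≤ v → c' ≤ c) : coinMax C v = c := by
  refine le_antisymm ?_ (le_coinMax hc hle)
  rcases coinMax_mem (C := C) v with h | h
  · omega
  · exact hmax _ h (coinMax_le v)

lemma grdAux_congr (C : List ℕ) : ∀ v f1 f2, v ≤ f1 → v ≤ f2 →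
    grdAux C f1 v = grdAux C f2 v := by
  intro v
  induction v using Nat.strong_induction_on with
  | _ v ih =>
    intro f1 f2 h1 h2
    match f1, f2 with
    | 0, 0 => rfl
    | 0, f2 + 1 =>
      interval_cases v
      simp [grdAux]
    | f1 + 1, 0 =>
      interval_cases v
      simp [grdAux]
    | f1 + 1, f2 + 1 =>
      simp only [grdAux]
      by_cases hv : v = 0 ∨ coinMax C v = 0
      · simp [hv]
      · rw [if_neg hv, if_neg hv]
        push_neg at hv
        have hc : 1 ≤ coinMax C v := Nat.one_le_iff_ne_zero.2 hv.2
        have hcv := coinMax_le (C := C) v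
        have : v - coinMax C v < v := by omega
        rw [ih (v - coinMax C v) this f1 f2 (by omega) (by omega)]

lemma grd_step {C : List ℕ} {v : ℕ} (hv : 0 < v) (hc : coinMax C v ≠ 0) :
    grd C v = 1 + grd C (v - coinMax C v) := by
  obtain ⟨v', rfl⟩ : ∃ v', v = v' + 1 := ⟨v - 1, by omega⟩
  show grdAux C (v' + 1) (v' + 1) = _
  simp only [grdAux]
  rw [if_neg (by omega)]
  have hcv := coinMax_le (C := C) (v' + 1)
  have hc1 : 1 ≤ coinMax C (v' + 1) := Nat.one_le_iff_ne_zero.2 hc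
  congr 1
  exact grdAux_congr C _ _ _ (by omega) (by omega)

lemma repr_zero (C : List ℕ) : 0 ∈ reprCosts C 0 := by
  refine ⟨List.replicate C.length 0, by simp, ?_, by simp⟩
  induction C with
  | nil => simp
  | cons c C ih => simpa [List.replicate_succ] using ih

lemma repr_add : ∀ (C : List ℕ) (c w k : ℕ), c ∈ C → k ∈ reprCosts C w →
    (k + 1) ∈ reprCosts C (w + c) := by
  intro C
  induction C with
  | nil => intro c w k hc; simp at hc
  | cons c0 C' ih =>
    intro c w k hc hk
    obtain ⟨x, hlen, hzip, hsum⟩ := hk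
    match x with
    | x0 :: xs =>
      simp only [List.length_cons, Nat.add_right_cancel_iff] at hlen
      simp only [List.zipWith_cons_cons, List.sum_cons] at hzip hsum
      rcases List.mem_cons.1 hc with rfl | hc'
      · refine ⟨(x0 + 1) :: xs, by simp [hlen], ?_, ?_⟩
        · simp only [List.zipWith_cons_cons, List.sum_cons]
          have : (x0 + 1) * c = x0 * c + c := by ring
          omega
        · simp only [List.sum_cons]; omega
      · have hxs : xs.sum ∈ reprCosts C' (List.zipWith (· * ·) xs C').sum :=
          ⟨xs, hlen, rfl, rfl⟩
        obtain ⟨xs', hlen', hzip', hsum'⟩ := ih c _ _ hc' hxs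
        refine ⟨x0 :: xs', by simp [hlen'], ?_, ?_⟩
        · simp only [List.zipWith_cons_cons, List.sum_cons]; omega
        · simp only [List.sum_cons]; omega

lemma repr_remove : ∀ (C : List ℕ) (v k : ℕ), k ∈ reprCosts C v → 0 < k →
    ∃ c ∈ C, c ≤ v ∧ (k - 1) ∈ reprCosts C (v - c) := by
  intro C
  induction C with
  | nil =>
    intro v k hk h0
    obtain ⟨x, hlen, hzip, hsum⟩ := hk
    match x with
    | [] => simp at hsum; omega
  | cons c0 C' ih =>
    intro v k hk h0
    obtain ⟨x, hlen, hzip, hsum⟩ := hk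
    match x with
    | x0 :: xs =>
      simp only [List.length_cons, Nat.add_right_cancel_iff] at hlen
      simp only [List.zipWith_cons_cons, List.sum_cons] at hzip hsum
      by_cases hx0 : 0 < x0
      · refine ⟨c0, by simp, ?_, ?_⟩
        · have : x0 * c0 ≥ 1 * c0 := Nat.mul_le_mul_right _ hx0
          simp at this; omega
        · refine ⟨(x0 - 1) :: xs, by simp [hlen], ?_, ?_⟩
          · simp only [List.zipWith_cons_cons, List.sum_cons]
            obtain ⟨x1, rfl⟩ : ∃ x1, x0 = x1 + 1 := ⟨x0 - 1, by omega⟩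
            have : (x1 + 1) * c0 = x1 * c0 + c0 := by ring
            simp only [Nat.add_sub_cancel]
            omega
          · simp only [List.sum_cons]; omega
      · have hx0' : x0 = 0 := by omega
        subst hx0'
        have hxs : xs.sum ∈ reprCosts C' (List.zipWith (· * ·) xs C').sum :=
          ⟨xs, hlen, rfl, rfl⟩
        have hkpos : 0 < xs.sum := by omega
        obtain ⟨c, hc, hcle, ⟨xs', hlen', hzip', hsum'⟩⟩ := ih _ _ hxs hkpos
        refine ⟨c, List.mem_cons_of_mem _ hc, by omega, ?_⟩
        refine ⟨0 :: xs', by simp [hlen'], ?_, ?_⟩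
        · simp only [List.zipWith_cons_cons, List.sum_cons]; omega
        · simp only [List.sum_cons]; omega

lemma repr_eq_zero : ∀ (C : List ℕ) (v : ℕ), 0 ∈ reprCosts C v → v = 0 := by
  intro C
  induction C with
  | nil =>
    intro v hv
    obtain ⟨x, hlen, hzip, hsum⟩ := hv
    match x with
    | [] => simpa using hzip.symm
  | cons c0 C' ih =>
    intro v hv
    obtain ⟨x, hlen, hzip, hsum⟩ := hv
    match x with
    | x0 :: xs =>
      simp only [List.length_cons, Nat.add_right_cancel_iff] at hlen
      simp only [List.zipWith_cons_cons, List.sum_cons] at hzip hsum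
      have hx0 : x0 = 0 := by omega
      subst hx0
      have := ih (List.zipWith (· * ·) xs C').sum ⟨xs, hlen, rfl, by omega⟩
      omega

end S19

namespace S19

/-- the coin list -/
def Dl (r a : ℕ) : List ℕ := (List.range (3 * r + 2)).map (fun i => dCoin r a (i + 1))

/-- closed form for greedy count below `2*r*(a+1)+2`, in terms of `m, s` with
`v = m*(a+1)+s`, `s < a+1`. -/
def gfun (r a m s : ℕ) : ℕ :=
  if s = 0 then (if m = 0 then 0 else (a + 2) / 2)
  else if s = 1 then (if m ≤ r then 1 else 1 + (a + 1) / 2)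
  else (s + 1) / 2

lemma mul_le_mul_r {m1 m2 : ℕ} (q : ℕ) (h : m1 ≤ m2) : m1 * q ≤ m2 * q :=
  Nat.mul_le_mul_right _ h

lemma le_of_le {q m1 s1 m2 s2 : ℕ} (h : m1 * q + s1 ≤ m2 * q + s2) (h2 : s2 < q) :
    m1 ≤ m2 := by
  by_contra hcon
  push_neg at hcon
  have h3 : (m2 + 1) * q ≤ m1 * q := mul_le_mul_r q (by omega)
  have h4 : (m2 + 1) * q = m2 * q + q := by ring
  omega

lemma lt_of_le {q m1 s1 m2 s2 : ℕ} (h : m1 * q + s1 ≤ m2 * q + s2) (h2 : s2 < q)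
    (h3 : s2 < s1) : m1 < m2 := by
  have hm := le_of_le h h2
  by_contra hcon
  push_neg at hcon
  have h4 : m2 * q ≤ m1 * q := mul_le_mul_r q hcon
  omega

lemma dCoin_formula (r a : ℕ) (ha : 2 ≤ a) : ∀ i, i < 3 * r + 2 →
    dCoin r a (i + 1) =
      if i < 2 * r + 2 then (i / 2) * (a + 1) + i % 2 + 1 else (i - r - 1) * (a + 1) + 2 := by
  intro i
  induction i using Nat.strong_induction_on with
  | _ i ih =>
    intro hi
    match i with
    | 0 => simp [dCoin]
    | 1 =>
      rw [if_pos (by omega)]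
      simp [dCoin]
    | j + 2 =>
      show dCoin r a (j + 3) = _
      rw [dCoin]
      rw [ih (j + 1) (by omega) (by omega)]
      by_cases hb : j + 3 ≤ 2 * r + 2
      · rw [if_pos hb, if_pos (show j + 1 < 2 * r + 2 by omega),
          if_pos (show j + 2 < 2 * r + 2 by omega)]
        by_cases hp : (j + 3) % 2 = 1
        · -- j even
          rw [if_pos hp]
          rw [show (j + 1) / 2 = j / 2 from by omega,
            show (j + 2) / 2 = j / 2 + 1 from by omega]
          have e : (j / 2 + 1) * (a + 1) = (j / 2) * (a + 1) + (a + 1) := by ring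
          omega
        · -- j odd
          rw [if_neg hp]
          rw [show (j + 1) / 2 = (j + 2) / 2 from by omega]
          omega
      · rw [if_neg hb, if_neg (show ¬ j + 2 < 2 * r + 2 by omega)]
        by_cases hc : j + 1 < 2 * r + 2
        · -- boundary: j + 1 = 2r+1
          have hj : j + 1 = 2 * r + 1 := by omega
          rw [if_pos hc]
          rw [show (j + 1) / 2 = r from by omega, show (j + 1) % 2 = 1 from by omega,
            show j + 2 - r - 1 = r + 1 from by omega]
          have e : (r + 1) * (a + 1) = r * (a + 1) + (a + 1) := by ring
          omega
        · rw [if_neg hc]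
          rw [show j + 2 - r - 1 = (j - r) + 1 from by omega,
            show j + 1 - r - 1 = j - r from by omega]
          have e : (j - r + 1) * (a + 1) = (j - r) * (a + 1) + (a + 1) := by ring
          omega

lemma mem_D {r a c : ℕ} (hr : 1 ≤ r) (ha : 2 ≤ a) :
    c ∈ Dl r a ↔
      (∃ m, m ≤ r ∧ c = m * (a + 1) + 1) ∨ (∃ m, m ≤ 2 * r ∧ c = m * (a + 1) + 2) := by
  constructor
  · intro hc
    simp only [Dl, List.mem_map, List.mem_range] at hc
    obtain ⟨i, hi, rfl⟩ := hc
    rw [dCoin_formula r a ha i hi]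
    by_cases hb : i < 2 * r + 2
    · rw [if_pos hb]
      by_cases hp : i % 2 = 0
      · left; exact ⟨i / 2, by omega, by omega⟩
      · right; exact ⟨i / 2, by omega, by omega⟩
    · rw [if_neg hb]
      right; exact ⟨i - r - 1, by omega, by omega⟩
  · intro hc
    simp only [Dl, List.mem_map, List.mem_range]
    rcases hc with ⟨m, hm, rfl⟩ | ⟨m, hm, rfl⟩
    · refine ⟨2 * m, by omega, ?_⟩
      rw [dCoin_formula r a ha _ (by omega), if_pos (by omega),
        show 2 * m / 2 = m from by omega]
      omega
    · by_cases hmr : m ≤ r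
      · refine ⟨2 * m + 1, by omega, ?_⟩
        rw [dCoin_formula r a ha _ (by omega), if_pos (by omega),
          show (2 * m + 1) / 2 = m from by omega]
        omega
      · refine ⟨m + r + 1, by omega, ?_⟩
        rw [dCoin_formula r a ha _ (by omega), if_neg (by omega),
          show m + r + 1 - r - 1 = m from by omega]

lemma coin_ge_one {r a c : ℕ} (hr : 1 ≤ r) (ha : 2 ≤ a) (hc : c ∈ Dl r a) : 1 ≤ c := by
  rcases (mem_D hr ha).1 hc with ⟨m, _, rfl⟩ | ⟨m, _, rfl⟩ <;> omega

lemma coin_le_N {r a c : ℕ} (hr : 1 ≤ r) (ha : 2 ≤ a) (hc : c ∈ Dl r a) :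
    c ≤ 2 * r * (a + 1) + 2 := by
  rcases (mem_D hr ha).1 hc with ⟨m, hm, rfl⟩ | ⟨m, hm, rfl⟩
  · have := mul_le_mul_r (a + 1) (show m ≤ 2 * r from by omega)
    omega
  · have := mul_le_mul_r (a + 1) hm
    omega

lemma m_le_2r {r a m s : ℕ} (ha : 2 ≤ a) (h : m * (a + 1) + s < 2 * r * (a + 1) + 2) :
    m ≤ 2 * r := by
  by_contra hcon
  push_neg at hcon
  have h3 : (2 * r + 1) * (a + 1) ≤ m * (a + 1) := mul_le_mul_r (a + 1) (by omega)
  have h4 : (2 * r + 1) * (a + 1) = 2 * r * (a + 1) + (a + 1) := by ring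
  omega

end S19

namespace S19

/-- identification of the greedy coin for `v < N`. -/
lemma cmax_lt {r a v m s : ℕ} (hr : 1 ≤ r) (ha : 2 ≤ a)
    (hv : v = m * (a + 1) + s) (hs : s < a + 1) (hvN : v < 2 * r * (a + 1) + 2)
    (hv0 : 0 < v) :
    coinMax (Dl r a) v =
      if 2 ≤ s then m * (a + 1) + 2
      else if s = 1 ∧ m ≤ r then m * (a + 1) + 1
      else (m - 1) * (a + 1) + 2 := by
  subst hv
  have hm2r : m ≤ 2 * r := m_le_2r ha hvN
  by_cases h2 : 2 ≤ s
  · rw [if_pos h2]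
    apply coinMax_eq_of
    · exact (mem_D hr ha).2 (Or.inr ⟨m, hm2r, rfl⟩)
    · omega
    · intro c' hc' hle
      rcases (mem_D hr ha).1 hc' with ⟨m', hm', rfl⟩ | ⟨m', hm', rfl⟩ <;>
      · have h3 := le_of_le hle hs
        have h4 := mul_le_mul_r (a + 1) h3
        omega
  · rw [if_neg h2]
    by_cases h1 : s = 1 ∧ m ≤ r
    · rw [if_pos h1]
      apply coinMax_eq_of
      · exact (mem_D hr ha).2 (Or.inl ⟨m, h1.2, rfl⟩)
      · omega
      · intro c' hc' hle
        omega
    · rw [if_neg h1]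
      -- here s = 0 (with m ≥ 1) or s = 1 with m > r; in both cases m ≥ 1
      have hm1 : 1 ≤ m := by
        rcases Nat.lt_or_ge m 1 with h | h
        · exfalso; interval_cases m <;> omega
        · exact h
      obtain ⟨m1, rfl⟩ : ∃ m1, m = m1 + 1 := ⟨m - 1, by omega⟩
      simp only [Nat.add_sub_cancel]
      have hexp : (m1 + 1) * (a + 1) = m1 * (a + 1) + (a + 1) := by ring
      apply coinMax_eq_of
      · exact (mem_D hr ha).2 (Or.inr ⟨m1, by omega, rfl⟩)
      · omega
      · intro c' hc' hle
        rcases (mem_D hr ha).1 hc' with ⟨m', hm', rfl⟩ | ⟨m', hm', rfl⟩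
        · -- coin m'*(a+1)+1
          rcases (show s = 0 ∨ (s = 1 ∧ r < m1 + 1) from by omega) with hs0 | ⟨hs1, hmr⟩
          · subst hs0
            have h3 : m' < m1 + 1 := lt_of_le hle (by omega) (by omega)
            have h4 := mul_le_mul_r (a + 1) (show m' ≤ m1 from by omega)
            omega
          · have h3 := mul_le_mul_r (a + 1) (show m' ≤ m1 from by omega)
            omega
        · -- coin m'*(a+1)+2
          have h3 : m' < m1 + 1 := lt_of_le hle (by omega) (by omega)
          have h4 := mul_le_mul_r (a + 1) (show m' ≤ m1 from by omega)
          omega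

lemma cmax_ge {r a v : ℕ} (hr : 1 ≤ r) (ha : 2 ≤ a)
    (hvN : 2 * r * (a + 1) + 2 ≤ v) :
    coinMax (Dl r a) v = 2 * r * (a + 1) + 2 := by
  apply coinMax_eq_of
  · exact (mem_D hr ha).2 (Or.inr ⟨2 * r, le_refl _, rfl⟩)
  · exact hvN
  · intro c' hc' _
    exact coin_le_N hr ha hc'

lemma grd_zero (C : List ℕ) : grd C 0 = 0 := rfl

/-- closed form of the greedy count below N. -/
lemma grd_closed {r a : ℕ} (hr : 1 ≤ r) (ha : 2 ≤ a) :
    ∀ v, v < 2 * r * (a + 1) + 2 → ∀ m s, v = m * (a + 1) + s → s < a + 1 →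
      grd (Dl r a) v = gfun r a m s := by
  intro v
  induction v using Nat.strong_induction_on with
  | _ v ih =>
    intro hvN m s hv hs
    by_cases hv0 : v = 0
    · have hm0 : m = 0 := by
        by_contra h
        have := mul_le_mul_r (a + 1) (show 1 ≤ m from by omega)
        omega
      have hs0 : s = 0 := by omega
      subst hv0; subst hm0; subst hs0
      simp [grd_zero, gfun]
    · have hv0' : 0 < v := by omega
      have hcm := cmax_lt hr ha hv hs hvN hv0'
      by_cases h2 : 2 ≤ s
      · rw [if_pos h2] at hcm
        have hstep := grd_step hv0' (by rw [hcm]; omega)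
        rw [hcm] at hstep
        have hrem : v - (m * (a + 1) + 2) = s - 2 := by omega
        rw [hrem] at hstep
        have hlt : s - 2 < v := by omega
        rw [ih _ hlt (by omega) 0 (s - 2) (by omega) (by omega)] at hstep
        rw [hstep]
        simp only [gfun]
        split_ifs <;> first | omega | exact (False.elim (by assumption))
      · by_cases h1 : s = 1 ∧ m ≤ r
        · rw [if_neg h2, if_pos h1] at hcm
          have hstep := grd_step hv0' (by rw [hcm]; omega)
          rw [hcm] at hstep
          have hrem : v - (m * (a + 1) + 1) = 0 := by omega
          rw [hrem, grd_zero] at hstep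
          rw [hstep]
          simp only [gfun]
          split_ifs <;> first | omega | exact (False.elim (by assumption))
        · rw [if_neg h2, if_neg h1] at hcm
          have hm1 : 1 ≤ m := by
            by_contra h
            have hm0 : m = 0 := by omega
            subst hm0
            simp at hv
            omega
          obtain ⟨m1, rfl⟩ : ∃ m1, m = m1 + 1 := ⟨m - 1, by omega⟩
          simp only [Nat.add_sub_cancel] at hcm
          have hexp : (m1 + 1) * (a + 1) = m1 * (a + 1) + (a + 1) := by ring
          have hstep := grd_step hv0' (by rw [hcm]; omega)
          rw [hcm] at hstep
          rcases (show s = 0 ∨ (s = 1 ∧ r < m1 + 1) from by omega) with hs0 | ⟨hs1, hmr⟩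
          · -- v = (m1+1)(a+1), remainder a - 1
            subst hs0
            have hrem : v - (m1 * (a + 1) + 2) = a - 1 := by omega
            rw [hrem] at hstep
            have hlt : a - 1 < v := by omega
            rw [ih _ hlt (by omega) 0 (a - 1) (by omega) (by omega)] at hstep
            rw [hstep]
            simp only [gfun]
            split_ifs <;> first | omega | exact (False.elim (by assumption))
          · -- v = (m1+1)(a+1)+1 with m1+1 > r, remainder a
            subst hs1
            have hrem : v - (m1 * (a + 1) + 2) = a := by omega
            rw [hrem] at hstep
            have hlt : a < v := by omega
            rw [ih _ hlt (by omega) 0 a (by omega) (by omega)] at hstep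
            rw [hstep]
            simp only [gfun]
            split_ifs <;> first | omega | exact (False.elim (by assumption))

lemma grd_split {r a : ℕ} (hr : 1 ≤ r) (ha : 2 ≤ a) :
    ∀ t w, w < 2 * r * (a + 1) + 2 →
      grd (Dl r a) (t * (2 * r * (a + 1) + 2) + w) = t + grd (Dl r a) w := by
  intro t
  induction t with
  | zero => intro w hw; simp
  | succ t ih =>
    intro w hw
    set N := 2 * r * (a + 1) + 2 with hN
    have hexp : (t + 1) * N = t * N + N := by ring
    have hv0 : 0 < (t + 1) * N + w := by omega
    have hcm := cmax_ge hr ha (show N ≤ (t + 1) * N + w from by omega)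
    have hstep := grd_step hv0 (by rw [hcm]; omega)
    rw [hcm] at hstep
    have hrem : (t + 1) * N + w - N = t * N + w := by omega
    rw [hrem] at hstep
    rw [hstep, ih w hw]
    omega

end S19

namespace S19

lemma lt_of_lt {q m1 s1 m2 s2 : ℕ} (h : m1 * q + s1 < m2 * q + s2) (h2 : s2 < q)
    (h3 : s2 ≤ s1) : m1 < m2 := by
  have hm := le_of_le (le_of_lt h) h2
  by_contra hcon
  push_neg at hcon
  have h4 : m2 * q ≤ m1 * q := mul_le_mul_r q hcon
  omega

lemma decomp_unique {q m1 s1 m2 s2 : ℕ} (h : m1 * q + s1 = m2 * q + s2)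
    (h1 : s1 < q) (h2 : s2 < q) : m1 = m2 ∧ s1 = s2 := by
  have e1 : m1 ≤ m2 := le_of_le (le_of_eq h) h2
  have e2 : m2 ≤ m1 := le_of_le (le_of_eq h.symm) h1
  have hm : m1 = m2 := le_antisymm e1 e2
  subst hm
  exact ⟨rfl, by omega⟩

lemma decomp3 {q m1 t1 m2 t2 : ℕ} (hq : 0 < q) (h : m1 * q + t1 = m2 * q + t2)
    (h1 : t1 < 2 * q) (h2 : t2 < 2 * q) :
    (m1 = m2 ∧ t1 = t2) ∨ (m1 + 1 = m2 ∧ t1 = t2 + q) ∨ (m2 + 1 = m1 ∧ t2 = t1 + q) := by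
  have e1 : (m1 + 1) * q = m1 * q + q := by ring
  have e2 : (m2 + 1) * q = m2 * q + q := by ring
  rcases Nat.lt_or_ge t1 q with ht1 | ht1 <;> rcases Nat.lt_or_ge t2 q with ht2 | ht2
  · rcases decomp_unique h ht1 ht2 with ⟨hm, hs⟩
    exact Or.inl ⟨hm, hs⟩
  · have h' : m1 * q + t1 = (m2 + 1) * q + (t2 - q) := by omega
    rcases decomp_unique h' ht1 (by omega) with ⟨hm, hs⟩
    exact Or.inr (Or.inr ⟨hm.symm, by omega⟩)
  · have h' : (m1 + 1) * q + (t1 - q) = m2 * q + t2 := by omega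
    rcases decomp_unique h' (by omega) ht2 with ⟨hm, hs⟩
    exact Or.inr (Or.inl ⟨hm, by omega⟩)
  · have h' : (m1 + 1) * q + (t1 - q) = (m2 + 1) * q + (t2 - q) := by omega
    rcases decomp_unique h' (by omega) (by omega) with ⟨hm, hs⟩
    exact Or.inl ⟨by omega, by omega⟩

lemma loc1 {r a m s m' s' mc sc : ℕ} (hr : 1 ≤ r) (ha : 2 ≤ a)
    (hs : s < a + 1) (hs' : s' < a + 1)
    (hcoin : (sc = 1 ∧ mc ≤ r) ∨ (sc = 2 ∧ mc ≤ 2 * r))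
    (heq : m * (a + 1) + s = m' * (a + 1) + s' + (mc * (a + 1) + sc)) :
    gfun r a m s ≤ 1 + gfun r a m' s' := by
  have e1 : (m' + mc) * (a + 1) = m' * (a + 1) + mc * (a + 1) := by ring
  have heq2 : m * (a + 1) + s = (m' + mc) * (a + 1) + (s' + sc) := by omega
  have hd := decomp3 (show 0 < a + 1 by omega) heq2 (by omega) (by omega)
  simp only [gfun]
  split_ifs <;> first | omega | exact (False.elim (by assumption))

lemma loc2 {r a m s mu su mc sc : ℕ} (hr : 1 ≤ r) (ha : 2 ≤ a)
    (hs : s < a + 1) (hsu : su < a + 1)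
    (hcoin : (sc = 1 ∧ mc ≤ r) ∨ (sc = 2 ∧ mc ≤ 2 * r))
    (heq : mu * (a + 1) + su + (mc * (a + 1) + sc) = 2 * r * (a + 1) + 2 + (m * (a + 1) + s))
    (hlt : m * (a + 1) + s < mc * (a + 1) + sc)
    (hwN : m * (a + 1) + s < 2 * r * (a + 1) + 2) :
    gfun r a m s ≤ gfun r a mu su := by
  have h4 : m ≤ mc := le_of_le (le_of_lt hlt) (by omega)
  have h5 : m < mc ∨ s < sc := by
    rcases Nat.lt_or_ge s sc with h | h
    · exact Or.inr h
    · exact Or.inl (lt_of_lt hlt (by omega) h)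
  have hm2r : m ≤ 2 * r := m_le_2r ha hwN
  have e1 : (mu + mc) * (a + 1) = mu * (a + 1) + mc * (a + 1) := by ring
  have e2 : (2 * r + m) * (a + 1) = 2 * r * (a + 1) + m * (a + 1) := by ring
  have heq2 : (mu + mc) * (a + 1) + (su + sc) = (2 * r + m) * (a + 1) + (s + 2) := by omega
  have hd := decomp3 (show 0 < a + 1 by omega) heq2 (by omega) (by omega)
  simp only [gfun]
  split_ifs <;> first | omega | exact (False.elim (by assumption))

lemma grd_key {r a c v : ℕ} (hr : 1 ≤ r) (ha : 2 ≤ a) (hc : c ∈ Dl r a) (hcv : c ≤ v) :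
    grd (Dl r a) v ≤ 1 + grd (Dl r a) (v - c) := by
  have hcN : c ≤ 2 * r * (a + 1) + 2 := coin_le_N hr ha hc
  have hN1 : 1 ≤ 2 * r * (a + 1) + 2 := by omega
  obtain ⟨t, w, hwN, rfl⟩ : ∃ t w, w < 2 * r * (a + 1) + 2 ∧
      v = t * (2 * r * (a + 1) + 2) + w := by
    refine ⟨v / (2 * r * (a + 1) + 2), v % (2 * r * (a + 1) + 2),
      Nat.mod_lt _ (by omega), ?_⟩
    have h := Nat.div_add_mod v (2 * r * (a + 1) + 2)
    have h2 : (2 * r * (a + 1) + 2) * (v / (2 * r * (a + 1) + 2)) =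
        (v / (2 * r * (a + 1) + 2)) * (2 * r * (a + 1) + 2) := Nat.mul_comm _ _
    omega
  obtain ⟨mc, sc, hcoin, rfl⟩ : ∃ mc sc, ((sc = 1 ∧ mc ≤ r) ∨ (sc = 2 ∧ mc ≤ 2 * r)) ∧
      c = mc * (a + 1) + sc := by
    rcases (mem_D hr ha).1 hc with ⟨mc, hmc, rfl⟩ | ⟨mc, hmc, rfl⟩
    · exact ⟨mc, 1, Or.inl ⟨rfl, hmc⟩, rfl⟩
    · exact ⟨mc, 2, Or.inr ⟨rfl, hmc⟩, rfl⟩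
  rw [grd_split hr ha t w hwN]
  by_cases hcw : mc * (a + 1) + sc ≤ w
  · have hsub : t * (2 * r * (a + 1) + 2) + w - (mc * (a + 1) + sc) =
        t * (2 * r * (a + 1) + 2) + (w - (mc * (a + 1) + sc)) := by omega
    rw [hsub, grd_split hr ha t _ (by omega)]
    suffices h : grd (Dl r a) w ≤ 1 + grd (Dl r a) (w - (mc * (a + 1) + sc)) by omega
    obtain ⟨m, s, hsq, hw⟩ : ∃ m s, s < a + 1 ∧ w = m * (a + 1) + s := by
      refine ⟨w / (a + 1), w % (a + 1), Nat.mod_lt _ (by omega), ?_⟩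
      have h := Nat.div_add_mod w (a + 1)
      have h2 : (a + 1) * (w / (a + 1)) = (w / (a + 1)) * (a + 1) := Nat.mul_comm _ _
      omega
    obtain ⟨m', s', hsq', hw'⟩ : ∃ m' s', s' < a + 1 ∧
        w - (mc * (a + 1) + sc) = m' * (a + 1) + s' := by
      refine ⟨(w - (mc * (a + 1) + sc)) / (a + 1), (w - (mc * (a + 1) + sc)) % (a + 1),
        Nat.mod_lt _ (by omega), ?_⟩
      have h := Nat.div_add_mod (w - (mc * (a + 1) + sc)) (a + 1)
      have h2 : (a + 1) * ((w - (mc * (a + 1) + sc)) / (a + 1)) =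
          ((w - (mc * (a + 1) + sc)) / (a + 1)) * (a + 1) := Nat.mul_comm _ _
      omega
    rw [grd_closed hr ha w hwN m s hw hsq,
      grd_closed hr ha _ (by omega) m' s' hw' hsq']
    exact loc1 hr ha hsq hsq' hcoin (by omega)
  · push_neg at hcw
    match t with
    | 0 => simp at hcv; omega
    | t1 + 1 =>
      have e1 : (t1 + 1) * (2 * r * (a + 1) + 2) =
          t1 * (2 * r * (a + 1) + 2) + (2 * r * (a + 1) + 2) := by ring
      have hsub : (t1 + 1) * (2 * r * (a + 1) + 2) + w - (mc * (a + 1) + sc) =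
          t1 * (2 * r * (a + 1) + 2) + (2 * r * (a + 1) + 2 + w - (mc * (a + 1) + sc)) := by
        omega
      rw [hsub, grd_split hr ha t1 _ (by omega)]
      suffices h : grd (Dl r a) w ≤
          grd (Dl r a) (2 * r * (a + 1) + 2 + w - (mc * (a + 1) + sc)) by omega
      obtain ⟨m, s, hsq, hw⟩ : ∃ m s, s < a + 1 ∧ w = m * (a + 1) + s := by
        refine ⟨w / (a + 1), w % (a + 1), Nat.mod_lt _ (by omega), ?_⟩
        have h := Nat.div_add_mod w (a + 1)
        have h2 : (a + 1) * (w / (a + 1)) = (w / (a + 1)) * (a + 1) := Nat.mul_comm _ _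
        omega
      obtain ⟨mu, su, hsu, hu⟩ : ∃ mu su, su < a + 1 ∧
          2 * r * (a + 1) + 2 + w - (mc * (a + 1) + sc) = mu * (a + 1) + su := by
        refine ⟨(2 * r * (a + 1) + 2 + w - (mc * (a + 1) + sc)) / (a + 1),
          (2 * r * (a + 1) + 2 + w - (mc * (a + 1) + sc)) % (a + 1),
          Nat.mod_lt _ (by omega), ?_⟩
        have h := Nat.div_add_mod (2 * r * (a + 1) + 2 + w - (mc * (a + 1) + sc)) (a + 1)
        have h2 : (a + 1) * ((2 * r * (a + 1) + 2 + w - (mc * (a + 1) + sc)) / (a + 1)) =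
            ((2 * r * (a + 1) + 2 + w - (mc * (a + 1) + sc)) / (a + 1)) * (a + 1) :=
          Nat.mul_comm _ _
        omega
      rw [grd_closed hr ha w hwN m s hw hsq,
        grd_closed hr ha _ (by omega) mu su hu hsu]
      exact loc2 hr ha hsq hsu hcoin (by omega) (by omega) (by omega)

end S19

namespace S19

lemma grd_mem {r a : ℕ} (hr : 1 ≤ r) (ha : 2 ≤ a) :
    ∀ v, grd (Dl r a) v ∈ reprCosts (Dl r a) v := by
  intro v
  induction v using Nat.strong_induction_on with
  | _ v ih =>
    by_cases hv0 : v = 0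
    · subst hv0
      rw [grd_zero]
      exact repr_zero _
    · have h1 : (1 : ℕ) ∈ Dl r a := (mem_D hr ha).2 (Or.inl ⟨0, by omega, by ring⟩)
      have hcm1 : 1 ≤ coinMax (Dl r a) v := le_coinMax h1 (by omega)
      have hcle := coinMax_le (C := Dl r a) v
      have hcmem : coinMax (Dl r a) v ∈ Dl r a := by
        rcases coinMax_mem (C := Dl r a) v with h | h
        · omega
        · exact h
      rw [grd_step (by omega) (by omega)]
      have hrec := ih (v - coinMax (Dl r a) v) (by omega)
      have := repr_add _ _ _ _ hcmem hrec
      rw [show v - coinMax (Dl r a) v + coinMax (Dl r a) v = v from by omega] at this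
      rw [Nat.add_comm]
      exact this

lemma grd_le_all {r a : ℕ} (hr : 1 ≤ r) (ha : 2 ≤ a) :
    ∀ v k, k ∈ reprCosts (Dl r a) v → grd (Dl r a) v ≤ k := by
  intro v
  induction v using Nat.strong_induction_on with
  | _ v ih =>
    intro k hk
    by_cases hv0 : v = 0
    · subst hv0; rw [grd_zero]; omega
    · by_cases hk0 : k = 0
      · subst hk0
        exact absurd (repr_eq_zero _ _ hk) hv0
      · obtain ⟨c, hcC, hcle, hrest⟩ := repr_remove _ _ _ hk (by omega)
        have hc1 := coin_ge_one hr ha hcC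
        have hkey := grd_key hr ha hcC hcle
        have hIH := ih (v - c) (by omega) (k - 1) hrest
        omega

end S19

theorem stmt_19 (r a : ℕ) (hr : 1 ≤ r) (ha : 2 ≤ a) :
    Orderly ((List.range (3 * r + 2)).map (fun i => dCoin r a (i + 1))) := by
  have hD : ((List.range (3 * r + 2)).map (fun i => dCoin r a (i + 1))) = S19.Dl r a := rfl
  rw [hD]
  intro v hv
  have hne : (reprCosts (S19.Dl r a) v).Nonempty := ⟨_, S19.grd_mem hr ha v⟩
  refine le_antisymm ?_ ?_
  · exact S19.grd_le_all hr ha v _ (Nat.sInf_mem hne)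
  · exact Nat.sInf_le (S19.grd_mem hr ha v)
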